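/- arXiv:1310.2742 — 2 statements merged into one kernel-verified Lean document; each statement's English description precedes it below -/
import Mathlib

section
/- Let V_F, V_E, g_L with 0 < V_F < V_E and g_L > 0, and set J_v(v,g) := −g_L v + g(V_E − v). Let p : (0,V_F)×(0,∞) → [0,∞) be measurable with √p weakly differentiable in g, p(v,g) → 0 as g → ∞ for a.e. v, ∫₀^{V_F}∫₀^∞ |∂_g √p|² dg dv ≤ K < ∞ and ∫₀^{V_F}∫₀^∞ p dg dv ≤ 1. Then for every 0 ≤ α < 1 and every G > 0 there is a finite constant C(α, G, K) (depending also on V_F, V_E, g_L) such that ∫₀^{V_F}∫₀^G p(v,g)/|J_v(v,g)|^α dg dv ≤ C(α, G, K). -/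
/-!
Write `q = √p(v, ·)`. Since `q² → 0` at infinity, the fundamental theorem of calculus on `(g, ∞)`
and `2|q q'| ≤ q'² + q²` give `p(v, g) ≤ ∫₀^∞ (∂_g q)² + ∫₀^∞ p`, uniformly in `g`. For fixed `v`
the drift `J_v` is affine in `g` with slope `V_E - v ≥ V_E - V_F > 0`, so `∫₀^G |J_v|^{-α} dg` is
at most `(V_E - V_F)^{-α}` times the integral of `|t|^{-α}` over a symmetric interval whose radius
is uniform in `v`; this is finite because `α < 1`. Multiplying the two bounds and integrating in
`v` (Tonelli) bounds the weighted integral by a constant times `K + 1`.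
-/

open MeasureTheory Filter Set
open scoped ENNReal Topology

theorem lintegral_Ioo_rpow_neg {α R : ℝ} (hα : α < 1) (hR : 0 ≤ R) :
    ∫⁻ t in Ioo 0 R, ENNReal.ofReal (t ^ (-α)) = ENNReal.ofReal (R ^ (1 - α) / (1 - α)) := by
  have hint : IntegrableOn (fun t : ℝ => t ^ (-α)) (Ioc 0 R) := by
    have := intervalIntegral.intervalIntegrable_rpow' (a := 0) (b := R) (r := -α) (by linarith)
    rwa [intervalIntegrable_iff_integrableOn_Ioc_of_le hR] at this
  rw [Measure.restrict_congr_set Ioo_ae_eq_Ioc, ← ofReal_integral_eq_lintegral_ofReal hint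
    (ae_restrict_of_forall_mem measurableSet_Ioc fun t ht => Real.rpow_nonneg ht.1.le _),
    ← intervalIntegral.integral_of_le hR, integral_rpow (Or.inl (by linarith)),
    Real.zero_rpow (by linarith), sub_zero, neg_add_eq_sub]

theorem lintegral_Ioo_abs_rpow_neg_le {α R : ℝ} (hα : α < 1) (hR : 0 ≤ R) :
    ∫⁻ t in Ioo (-R) R, ENNReal.ofReal (|t| ^ (-α)) ≤
      2 * ENNReal.ofReal (R ^ (1 - α) / (1 - α)) := by
  set F : ℝ → ℝ≥0∞ := fun t => ENNReal.ofReal (|t| ^ (-α))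
  have hpos : ∫⁻ t in Ioo 0 R, F t = ENNReal.ofReal (R ^ (1 - α) / (1 - α)) := by
    rw [← lintegral_Ioo_rpow_neg hα hR]
    exact setLIntegral_congr_fun measurableSet_Ioo fun t ht => by simp only [F, abs_of_pos ht.1]
  have hneg : ∫⁻ t in Ioc (-R) 0, F t = ∫⁻ t in Ioo 0 R, F t := by
    have := (Measure.measurePreserving_neg (volume : Measure ℝ)).setLIntegral_comp_preimage_emb
      (Homeomorph.neg ℝ).measurableEmbedding F (Ico 0 R)
    simp only [F, neg_preimage, neg_Ico, neg_zero, abs_neg] at this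
    rw [this, ← Measure.restrict_congr_set Ioo_ae_eq_Ico]
  calc ∫⁻ t in Ioo (-R) R, F t ≤ ∫⁻ t in Ioc (-R) 0 ∪ Ioo 0 R, F t :=
        lintegral_mono_set fun t ht => (le_or_gt t 0).imp (fun h => ⟨ht.1, h⟩) (fun h => ⟨h, ht.2⟩)
    _ ≤ (∫⁻ t in Ioc (-R) 0, F t) + ∫⁻ t in Ioo 0 R, F t := lintegral_union_le _ _ _
    _ = 2 * ENNReal.ofReal (R ^ (1 - α) / (1 - α)) := by rw [hneg, hpos, two_mul]

theorem setLIntegral_abs_sub_rpow_neg_le {α R b : ℝ} {s : Set ℝ} (hα : α < 1) (hR : 0 ≤ R)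
    (hs : s ⊆ Ioo (b - R) (b + R)) :
    ∫⁻ t in s, ENNReal.ofReal (|t - b| ^ (-α)) ≤
      2 * ENNReal.ofReal (R ^ (1 - α) / (1 - α)) := by
  calc ∫⁻ t in s, ENNReal.ofReal (|t - b| ^ (-α))
      ≤ ∫⁻ t in Ioo (b - R) (b + R), ENNReal.ofReal (|t - b| ^ (-α)) := lintegral_mono_set hs
    _ = ∫⁻ t in Ioo (-R) R, ENNReal.ofReal (|t| ^ (-α)) := by
      rw [← (measurePreserving_sub_right volume b).setLIntegral_comp_preimage_emb
        (measurableEmbedding_subRight b) _ (Ioo (-R) R), preimage_sub_const_Ioo,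
        neg_add_eq_sub, add_comm R]
    _ ≤ _ := lintegral_Ioo_abs_rpow_neg_le hα hR

theorem lintegral_inv_abs_drift_rpow_le {VF VE gL α G v : ℝ} (hVFE : VF < VE) (hgL : 0 ≤ gL)
    (hα0 : 0 ≤ α) (hα1 : α < 1) (hG : 0 ≤ G) (hv : v ∈ Ioo 0 VF) :
    ∫⁻ g in Ioo 0 G, ENNReal.ofReal ((|-gL * v + g * (VE - v)| ^ α)⁻¹) ≤
      ENNReal.ofReal ((VE - VF) ^ (-α)) *
        (2 * ENNReal.ofReal ((G + gL * VF / (VE - VF)) ^ (1 - α) / (1 - α))) := by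
  obtain ⟨hv0, hvF⟩ := hv
  have hslope₀ : 0 < VE - VF := sub_pos.2 hVFE
  have hslope : VE - VF ≤ VE - v := by linarith
  have hslope_v : 0 < VE - v := hslope₀.trans_le hslope
  set b := gL * v / (VE - v)
  have hb0 : 0 ≤ b := div_nonneg (mul_nonneg hgL hv0.le) hslope_v.le
  have hbR : b ≤ gL * VF / (VE - VF) :=
    div_le_div₀ (mul_nonneg hgL (hv0.trans hvF).le) (by gcongr) hslope₀ hslope
  have hpt : ∀ g, ENNReal.ofReal ((|-gL * v + g * (VE - v)| ^ α)⁻¹) ≤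
      ENNReal.ofReal ((VE - VF) ^ (-α)) * ENNReal.ofReal (|g - b| ^ (-α)) := by
    intro g
    have hJ : -gL * v + g * (VE - v) = (VE - v) * (g - b) := by
      simp only [b]; field_simp; ring
    rw [← ENNReal.ofReal_mul (Real.rpow_nonneg hslope₀.le _), hJ, abs_mul,
      abs_of_pos hslope_v, Real.mul_rpow hslope_v.le (abs_nonneg _), mul_inv,
      ← Real.rpow_neg hslope_v.le, ← Real.rpow_neg (abs_nonneg _)]
    gcongr ENNReal.ofReal (?_ * _)
    exact Real.rpow_le_rpow_of_nonpos hslope₀ hslope (neg_nonpos.2 hα0)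
  calc ∫⁻ g in Ioo 0 G, ENNReal.ofReal ((|-gL * v + g * (VE - v)| ^ α)⁻¹)
      ≤ ∫⁻ g in Ioo 0 G, ENNReal.ofReal ((VE - VF) ^ (-α)) * ENNReal.ofReal (|g - b| ^ (-α)) :=
        lintegral_mono hpt
    _ = ENNReal.ofReal ((VE - VF) ^ (-α)) * ∫⁻ g in Ioo 0 G, ENNReal.ofReal (|g - b| ^ (-α)) :=
        lintegral_const_mul' _ _ ENNReal.ofReal_ne_top
    _ ≤ _ := by
      gcongr
      exact setLIntegral_abs_sub_rpow_neg_le hα1 (add_nonneg hG (hb0.trans hbR))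
        fun g hg => ⟨by linarith [hg.1], by linarith [hg.2]⟩

theorem abs_le_integral_Ioi_abs_of_hasDerivAt_of_tendsto {f f' : ℝ → ℝ} {x : ℝ}
    (hcont : ContinuousWithinAt f (Ici x) x) (hderiv : ∀ t ∈ Ioi x, HasDerivAt f (f' t) t)
    (hint : IntegrableOn f' (Ioi x)) (hlim : Tendsto f atTop (𝓝 0)) :
    |f x| ≤ ∫ t in Ioi x, |f' t| :=
  calc |f x| = |∫ t in Ioi x, f' t| := by
        rw [integral_Ioi_of_hasDerivAt_of_tendsto hcont hderiv hint hlim, zero_sub, abs_neg]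
    _ ≤ ∫ t in Ioi x, |f' t| := abs_integral_le_integral_abs

theorem ofReal_sq_le_lintegral_deriv_sq_add_sq {q : ℝ → ℝ} {a x : ℝ}
    (hq : DifferentiableOn ℝ q (Ioi a)) (hlim : Tendsto (fun t => q t ^ 2) atTop (𝓝 0))
    (hx : a < x) :
    ENNReal.ofReal (q x ^ 2) ≤
      (∫⁻ t in Ioi a, ENNReal.ofReal (deriv q t ^ 2)) +
        ∫⁻ t in Ioi a, ENNReal.ofReal (q t ^ 2) := by
  have hsub : Ioi x ⊆ Ioi a := Ioi_subset_Ioi hx.le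
  set h : ℝ → ℝ := fun t => deriv q t ^ 2 + q t ^ 2
  have hh0 : ∀ t, 0 ≤ h t := fun t => by positivity
  calc ENNReal.ofReal (q x ^ 2) ≤ ∫⁻ t in Ioi x, ENNReal.ofReal (h t) := ?_
    _ ≤ ∫⁻ t in Ioi a, ENNReal.ofReal (h t) := lintegral_mono_set hsub
    _ = _ := by
      rw [← lintegral_add_left ((measurable_deriv q).pow_const 2).ennreal_ofReal]
      exact lintegral_congr fun t => ENNReal.ofReal_add (sq_nonneg _) (sq_nonneg _)
  by_cases hfin : ∫⁻ t in Ioi x, ENNReal.ofReal (h t) = ⊤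
  · simp [hfin]
  have hq_meas : AEStronglyMeasurable q (volume.restrict (Ioi x)) :=
    (hq.continuousOn.mono hsub).aestronglyMeasurable measurableSet_Ioi
  have hq'_meas : AEStronglyMeasurable (deriv q) (volume.restrict (Ioi x)) :=
    (measurable_deriv q).aestronglyMeasurable
  have hh : IntegrableOn h (Ioi x) :=
    ⟨(hq'_meas.pow 2).add (hq_meas.pow 2),
      (hasFiniteIntegral_iff_ofReal (ae_of_all _ hh0)).2 (lt_top_iff_ne_top.2 hfin)⟩
  have hamgm : ∀ t, |2 * q t * deriv q t| ≤ h t := fun t => by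
    rw [abs_mul, abs_mul, abs_two]
    nlinarith [sq_nonneg (|q t| - |deriv q t|), sq_abs (q t), sq_abs (deriv q t)]
  have hint : IntegrableOn (fun t => 2 * q t * deriv q t) (Ioi x) :=
    hh.mono' ((hq_meas.const_mul 2).mul hq'_meas) (ae_of_all _ hamgm)
  have hderiv : ∀ t ∈ Ioi x, HasDerivAt (fun t => q t ^ 2) (2 * q t * deriv q t) t :=
    fun t ht => by
      simpa using (hq.differentiableAt (Ioi_mem_nhds (hsub ht))).hasDerivAt.fun_pow 2
  have hcont : ContinuousWithinAt (fun t => q t ^ 2) (Ici x) x :=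
    ((hq.differentiableAt (Ioi_mem_nhds hx)).continuousAt.pow 2).continuousWithinAt
  rw [← ofReal_integral_eq_lintegral_ofReal hh (ae_of_all _ hh0)]
  refine ENNReal.ofReal_le_ofReal ?_
  calc q x ^ 2 = |q x ^ 2| := (abs_of_nonneg (sq_nonneg _)).symm
    _ ≤ ∫ t in Ioi x, |2 * q t * deriv q t| :=
      abs_le_integral_Ioi_abs_of_hasDerivAt_of_tendsto hcont hderiv hint hlim
    _ ≤ ∫ t in Ioi x, h t := integral_mono hint.abs hh hamgm

theorem aemeasurable_deriv_of_differentiableAt {β : Type*} [MeasurableSpace β] {f : β → ℝ → ℝ}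
    (hf : Measurable (Function.uncurry f)) {ρ : Measure (β × ℝ)} {u : Set (β × ℝ)}
    (hu : MeasurableSet u) (hd : ∀ z ∈ u, DifferentiableAt ℝ (f z.1) z.2) :
    AEMeasurable (fun z => deriv (f z.1) z.2) (ρ.restrict u) := by
  have hstep : Tendsto (fun n : ℕ => ((n : ℝ) + 1)⁻¹) atTop (𝓝[>] 0) :=
    tendsto_inv_atTop_nhdsGT_zero.comp
      (tendsto_natCast_atTop_atTop.atTop_add tendsto_const_nhds)
  set slope : ℕ → β × ℝ → ℝ := fun n z =>
    ((n : ℝ) + 1)⁻¹⁻¹ * (f z.1 (z.2 + ((n : ℝ) + 1)⁻¹) - f z.1 z.2)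
  have hslope : ∀ z ∈ u, Tendsto (slope · z) atTop (𝓝 (deriv (f z.1) z.2)) := fun z hz =>
    (hd z hz).hasDerivAt.tendsto_slope_zero_right.comp hstep
  have hf' : Measurable fun z : β × ℝ => f z.1 z.2 := hf
  refine aemeasurable_of_tendsto_metrizable_ae atTop (fun n => ?_)
    (ae_restrict_of_forall_mem hu hslope)
  exact (((hf.comp (measurable_fst.prodMk (measurable_snd.add_const _))).sub hf').const_mul
    _).aemeasurable

theorem AEMeasurable.setLIntegral_prod_right {β γ : Type*} [MeasurableSpace β]
    [MeasurableSpace γ] {μ : Measure β} {ν : Measure γ} [SFinite μ] [SFinite ν]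
    {f : β × γ → ℝ≥0∞} {s : Set β} {t : Set γ}
    (hf : AEMeasurable f ((μ.prod ν).restrict (s ×ˢ t))) :
    AEMeasurable (fun x => ∫⁻ y in t, f (x, y) ∂ν) (μ.restrict s) := by
  rw [← Measure.prod_restrict] at hf
  exact hf.lintegral_prod_right'

theorem lintegral_ofReal_div_le_mul {β : Type*} [MeasurableSpace β] {μ : Measure β}
    {f w : β → ℝ} {c : ℝ≥0∞} (hw : Measurable w) (hf : ∀ x, 0 ≤ f x)
    (hfc : ∀ᵐ x ∂μ, ENNReal.ofReal (f x) ≤ c) :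
    ∫⁻ x, ENNReal.ofReal (f x / w x) ∂μ ≤ c * ∫⁻ x, ENNReal.ofReal (w x)⁻¹ ∂μ := by
  have hw' : Measurable fun x => ENNReal.ofReal (w x)⁻¹ := by fun_prop
  rw [← lintegral_const_mul'' _ hw'.aemeasurable]
  refine lintegral_mono_ae (hfc.mono fun x hx => ?_)
  rw [div_eq_mul_inv, ENNReal.ofReal_mul (hf x)]
  gcongr

theorem singular_weight_integrability_general
    (VF VE gL : ℝ) (hVFE : VF < VE) (hgL : 0 < gL)
    (α G K : ℝ) (hα0 : 0 ≤ α) (hα1 : α < 1) (hG : 0 < G) :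
    ∃ C : ℝ, ∀ p : ℝ → ℝ → ℝ,
      Measurable (fun x : ℝ × ℝ => p x.1 x.2) →
      (∀ v g, 0 ≤ p v g) →
      (∀ v ∈ Set.Ioo (0:ℝ) VF,
          DifferentiableOn ℝ (fun g => Real.sqrt (p v g)) (Set.Ioi 0)) →
      (∀ v ∈ Set.Ioo (0:ℝ) VF, Filter.Tendsto (fun g => p v g) Filter.atTop (nhds 0)) →
      (∫⁻ x in ((Set.Ioo (0:ℝ) VF) ×ˢ (Set.Ioi (0:ℝ))),
          ENNReal.ofReal ((deriv (fun g' => Real.sqrt (p x.1 g')) x.2) ^ 2))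
        ≤ ENNReal.ofReal K →
      (∫⁻ x in ((Set.Ioo (0:ℝ) VF) ×ˢ (Set.Ioi (0:ℝ))), ENNReal.ofReal (p x.1 x.2)) ≤ 1 →
      (∫⁻ x in ((Set.Ioo (0:ℝ) VF) ×ˢ (Set.Ioo (0:ℝ) G)),
          ENNReal.ofReal (p x.1 x.2 / |(-gL * x.1 + x.2 * (VE - x.1))| ^ α))
        ≤ ENNReal.ofReal C := by
  set W := ENNReal.ofReal ((VE - VF) ^ (-α)) *
    (2 * ENNReal.ofReal ((G + gL * VF / (VE - VF)) ^ (1 - α) / (1 - α)))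
  refine ⟨((ENNReal.ofReal K + 1) * W).toReal, fun p hpm hp hdiff hlim hK hmass => ?_⟩
  set A : ℝ → ℝ≥0∞ := fun v => ∫⁻ g in Ioi 0, ENNReal.ofReal (deriv (fun g' => √(p v g')) g ^ 2)
  set B : ℝ → ℝ≥0∞ := fun v => ∫⁻ g in Ioi 0, ENNReal.ofReal (p v g)
  have hslice : ∀ v ∈ Ioo 0 VF, ∫⁻ g in Ioo 0 G,
      ENNReal.ofReal (p v g / |-gL * v + g * (VE - v)| ^ α) ≤ (A v + B v) * W := by
    intro v hv
    have hsq : ∀ g, √(p v g) ^ 2 = p v g := fun g => Real.sq_sqrt (hp v g)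
    refine (lintegral_ofReal_div_le_mul (by fun_prop) (hp v) (ae_restrict_of_forall_mem
      measurableSet_Ioo fun g hg => ?_)).trans
      (mul_le_mul_right (lintegral_inv_abs_drift_rpow_le hVFE hgL.le hα0 hα1 hG.le hv) _)
    simpa only [hsq] using ofReal_sq_le_lintegral_deriv_sq_add_sq (hdiff v hv)
      (by simpa only [hsq] using hlim v hv) hg.1
  have hD : AEMeasurable (fun z : ℝ × ℝ => ENNReal.ofReal (deriv (fun g' => √(p z.1 g')) z.2 ^ 2))
      (volume.restrict (Ioo 0 VF ×ˢ Ioi 0)) :=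
    ((aemeasurable_deriv_of_differentiableAt (f := fun v g => √(p v g)) hpm.sqrt
      (measurableSet_Ioo.prod measurableSet_Ioi) fun z hz =>
        (hdiff z.1 hz.1).differentiableAt (Ioi_mem_nhds hz.2)).pow_const 2).ennreal_ofReal
  have hAB : ∫⁻ v in Ioo 0 VF, (A v + B v) ≤ ENNReal.ofReal K + 1 := by
    rw [lintegral_add_left' hD.setLIntegral_prod_right, ← setLIntegral_prod _ hD,
      ← setLIntegral_prod _ hpm.ennreal_ofReal.aemeasurable]
    exact add_le_add hK hmass
  rw [ENNReal.ofReal_toReal (by finiteness), Measure.volume_eq_prod,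
    setLIntegral_prod _ (by fun_prop)]
  calc ∫⁻ v in Ioo 0 VF, ∫⁻ g in Ioo 0 G, ENNReal.ofReal (p v g / |-gL * v + g * (VE - v)| ^ α)
      ≤ ∫⁻ v in Ioo 0 VF, (A v + B v) * W := setLIntegral_mono' measurableSet_Ioo hslice
    _ = (∫⁻ v in Ioo 0 VF, (A v + B v)) * W := lintegral_mul_const' _ _ (by finiteness)
    _ ≤ (ENNReal.ofReal K + 1) * W := by gcongr

/-- Lemma 3.3. Integrability of the density against the singular
weight `|J_v|^{-α}`, `0 ≤ α < 1`, with a constant depending only on `α`, `G`, `K`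
and the parameters. -/
theorem singular_weight_integrability
    (VF VE gL : ℝ) (hVF : 0 < VF) (hVFE : VF < VE) (hgL : 0 < gL)
    (α G K : ℝ) (hα0 : 0 ≤ α) (hα1 : α < 1) (hG : 0 < G) (hK : 0 ≤ K) :
    ∃ C : ℝ, ∀ p : ℝ → ℝ → ℝ,
      Measurable (fun x : ℝ × ℝ => p x.1 x.2) →
      (∀ v g, 0 ≤ p v g) →
      (∀ v ∈ Set.Ioo (0:ℝ) VF,
          DifferentiableOn ℝ (fun g => Real.sqrt (p v g)) (Set.Ioi 0)) →
      (∀ v ∈ Set.Ioo (0:ℝ) VF, Filter.Tendsto (fun g => p v g) Filter.atTop (nhds 0)) →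
      (∫⁻ x in ((Set.Ioo (0:ℝ) VF) ×ˢ (Set.Ioi (0:ℝ))),
          ENNReal.ofReal ((deriv (fun g' => Real.sqrt (p x.1 g')) x.2) ^ 2))
        ≤ ENNReal.ofReal K →
      (∫⁻ x in ((Set.Ioo (0:ℝ) VF) ×ˢ (Set.Ioi (0:ℝ))), ENNReal.ofReal (p x.1 x.2)) ≤ 1 →
      (∫⁻ x in ((Set.Ioo (0:ℝ) VF) ×ˢ (Set.Ioo (0:ℝ) G)),
          ENNReal.ofReal (p x.1 x.2 / |(-gL * x.1 + x.2 * (VE - x.1))| ^ α))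
        ≤ ENNReal.ofReal C :=
  singular_weight_integrability_general VF VE gL hVFE hgL α G K hα0 hα1 hG
end

section
/- (Hölder interpolation to L^q with a vanishing weight.) Let V_F, V_E, g_L with 0 < V_F < V_E and g_L > 0, J_v(v,g) := −g_L v + g(V_E − v), G > 0, and Ω := (0,V_F)×(0,G). Let p : Ω → [0,∞) be measurable and assume: (i) J_v p ∈ L^r(Ω) for every 1 ≤ r < 4/3, and (ii) p/|J_v|^α ∈ L¹(Ω) for every 0 ≤ α < 1. Then p ∈ L^q(Ω) for every 1 ≤ q < 8/7. -/
/-!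
Write `p = (|J_v| p)^θ · (p / |J_v|^α)^(1-θ)` with `α (1-θ) = θ`, which holds wherever `J_v ≠ 0`,
i.e. almost everywhere. Hölder's inequality with `|J_v| p ∈ L^r` and `p / |J_v|^α ∈ L¹` puts `p`
in `L^q` as soon as `1/q = θ/r + (1-θ)`. Letting `r → 4/3` and `θ → 1/2` (so `α → 1`) reaches
every `q < 8/7`.
-/

open MeasureTheory Filter Set

theorem ae_add_mul_ne_zero {a b : ℝ → ℝ} (ha : Measurable a) (hb : Measurable b)
    (hb₀ : ∀ᵐ v, b v ≠ 0) : ∀ᵐ x : ℝ × ℝ, a x.1 + x.2 * b x.1 ≠ 0 := by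
  simp_rw [ae_iff, not_not, Measure.volume_eq_prod]
  refine Measure.measure_prod_null_of_ae_null
    (measurableSet_eq_fun (by fun_prop) measurable_const) ?_
  filter_upwards [hb₀] with v hv
  refine Set.Subsingleton.measure_zero (fun g₁ hg₁ g₂ hg₂ => ?_) _
  simp only [mem_preimage, mem_ofPred_eq] at hg₁ hg₂
  exact mul_right_cancel₀ hv (by linarith)

theorem rpow_div_rpow_mul_rpow_eq {P J a θ : ℝ} (hP : 0 ≤ P) (hJ : J ≠ 0)
    (ha : a * (1 - θ) = θ) : (P / |J| ^ a) ^ (1 - θ) * (|J| * P) ^ θ = P := by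
  have hJθ : |J| ^ θ ≠ 0 := (Real.rpow_pos_of_pos (abs_pos.2 hJ) θ).ne'
  rw [Real.div_rpow hP (by positivity), Real.mul_rpow (abs_nonneg J) hP,
    ← Real.rpow_mul (abs_nonneg J), ha]
  calc P ^ (1 - θ) / |J| ^ θ * (|J| ^ θ * P ^ θ) = P ^ ((1 - θ) + θ) := by
        rw [Real.rpow_add' hP (by norm_num)]; field_simp
    _ = P := by norm_num

theorem memLp_of_memLp_mul_of_integrable_div_rpow {Ω : Type*} [MeasurableSpace Ω]
    {μ : Measure Ω} {f w : Ω → ℝ} {a θ r q : ℝ} (hf : ∀ᵐ x ∂μ, 0 ≤ f x)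
    (hw : ∀ᵐ x ∂μ, w x ≠ 0) (hθ₀ : 0 < θ) (hθ₁ : θ < 1) (hr : 0 < r)
    (ha : a * (1 - θ) = θ) (hq : (1 - θ) + θ / r = q⁻¹)
    (hwf : MemLp (fun x => w x * f x) (ENNReal.ofReal r) μ)
    (hfw : Integrable (fun x => f x / |w x| ^ a) μ) : MemLp f (ENNReal.ofReal q) μ := by
  have hwf' := hwf.norm_rpow_div (ENNReal.ofReal θ)
  have hfw' := (memLp_one_iff_integrable.2 hfw).norm_rpow_div (ENNReal.ofReal (1 - θ))
  rw [ENNReal.toReal_ofReal hθ₀.le, ← ENNReal.ofReal_div_of_pos hθ₀] at hwf'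
  rw [ENNReal.toReal_ofReal (by linarith), ← ENNReal.ofReal_one,
    ← ENNReal.ofReal_div_of_pos (by linarith)] at hfw'
  have hθ₁' : 0 < 1 - θ := by linarith
  have hpqr : Real.HolderTriple (1 / (1 - θ)) (r / θ) q :=
    ⟨by simpa [inv_div] using hq, by positivity, by positivity⟩
  have := hpqr.ennrealOfReal
  refine (hwf'.smul hfw').ae_eq ?_
  filter_upwards [hf, hw] with x hfx hwx
  simp only [smul_eq_mul, Pi.mul_apply, Real.norm_eq_abs, abs_mul, abs_div, abs_of_nonneg hfx,
    abs_of_nonneg (Real.rpow_nonneg (abs_nonneg _) _)]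
  exact rpow_div_rpow_mul_rpow_eq hfx hwx ha

theorem exists_interpolation_exponents {q : ℝ} (hq₁ : 1 ≤ q) (hq : q < 8 / 7) :
    ∃ θ r α : ℝ, 0 < θ ∧ θ < 1 ∧ 1 ≤ r ∧ r < 4 / 3 ∧ 0 ≤ α ∧ α < 1 ∧
      α * (1 - θ) = θ ∧ (1 - θ) + θ / r = q⁻¹ := by
  set t := 1 - q⁻¹ with ht
  have ht₀ : 0 ≤ t := by
    have := inv_le_one_of_one_le₀ hq₁; linarith
  have ht₁ : t < 1 / 8 := by
    have : 7 / 8 < q⁻¹ := by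
      rw [lt_inv_comm₀ (by norm_num) (by linarith)]; linarith
    linarith
  -- `θ = 1/4 + 2t < 1/2`, then `r` solves `θ (1 - 1/r) = t` and `α = θ / (1 - θ)`
  have hθ : 0 < 1 / 4 + t := by linarith
  have hα : 0 < 3 / 4 - 2 * t := by linarith
  refine ⟨1 / 4 + 2 * t, (1 / 4 + 2 * t) / (1 / 4 + t), (1 / 4 + 2 * t) / (3 / 4 - 2 * t),
    by linarith, by linarith, ?_, ?_, by positivity, ?_, ?_, ?_⟩
  · rw [le_div_iff₀ hθ]; linarith
  · rw [div_lt_iff₀ hθ]; linarith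
  · rw [div_lt_one hα]; linarith
  · rw [show 1 - (1 / 4 + 2 * t) = 3 / 4 - 2 * t by ring, div_mul_cancel₀ _ hα.ne']
  · have : (1 / 4 + 2 * t) / ((1 / 4 + 2 * t) / (1 / 4 + t)) = 1 / 4 + t := by
      field_simp
    linarith

theorem Lq_from_weighted_bounds_general
    (VF VE gL G : ℝ)
    (p : ℝ → ℝ → ℝ)
    (hnonneg : ∀ v g, 0 ≤ p v g)
    (hJp : ∀ r : ℝ, 1 ≤ r → r < 4 / 3 →
        MeasureTheory.MemLp (fun x : ℝ × ℝ => (-gL * x.1 + x.2 * (VE - x.1)) * p x.1 x.2)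
          (ENNReal.ofReal r) (MeasureTheory.volume.restrict ((Set.Ioo (0:ℝ) VF) ×ˢ (Set.Ioo (0:ℝ) G))))
    (hsing : ∀ α : ℝ, 0 ≤ α → α < 1 →
        MeasureTheory.IntegrableOn
          (fun x : ℝ × ℝ => p x.1 x.2 / |(-gL * x.1 + x.2 * (VE - x.1))| ^ α)
          ((Set.Ioo (0:ℝ) VF) ×ˢ (Set.Ioo (0:ℝ) G))) :
    ∀ q : ℝ, 1 ≤ q → q < 8 / 7 →
      MeasureTheory.MemLp (fun x : ℝ × ℝ => p x.1 x.2) (ENNReal.ofReal q)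
        (MeasureTheory.volume.restrict ((Set.Ioo (0:ℝ) VF) ×ˢ (Set.Ioo (0:ℝ) G))) := by
  intro q hq₁ hq
  obtain ⟨θ, r, α, hθ₀, hθ₁, hr₁, hr, hα₀, hα₁, hα, hexp⟩ :=
    exists_interpolation_exponents hq₁ hq
  have hJ : ∀ᵐ x : ℝ × ℝ, -gL * x.1 + x.2 * (VE - x.1) ≠ 0 :=
    ae_add_mul_ne_zero (by fun_prop) (by fun_prop) <| by
      filter_upwards [Measure.ae_ne volume VE] with v hv using sub_ne_zero.2 hv.symm
  exact memLp_of_memLp_mul_of_integrable_div_rpow (.of_forall fun x => hnonneg x.1 x.2)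
    (ae_restrict_of_ae hJ) hθ₀ hθ₁ (by linarith) hα hexp (hJp r hr₁ hr) (hsing α hα₀ hα₁)

/-- Hölder interpolation with a vanishing weight: if `J_v p ∈ L^r`
for all `1 ≤ r < 4/3` and `p/|J_v|^α ∈ L¹` for all `0 ≤ α < 1`, then `p ∈ L^q`
for all `1 ≤ q < 8/7`. -/
theorem Lq_from_weighted_bounds
    (VF VE gL G : ℝ) (hVF : 0 < VF) (hVFE : VF < VE) (hgL : 0 < gL) (hG : 0 < G)
    (p : ℝ → ℝ → ℝ)
    (hmeas : Measurable fun x : ℝ × ℝ => p x.1 x.2)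
    (hnonneg : ∀ v g, 0 ≤ p v g)
    (hJp : ∀ r : ℝ, 1 ≤ r → r < 4 / 3 →
        MeasureTheory.MemLp (fun x : ℝ × ℝ => (-gL * x.1 + x.2 * (VE - x.1)) * p x.1 x.2)
          (ENNReal.ofReal r) (MeasureTheory.volume.restrict ((Set.Ioo (0:ℝ) VF) ×ˢ (Set.Ioo (0:ℝ) G))))
    (hsing : ∀ α : ℝ, 0 ≤ α → α < 1 →
        MeasureTheory.IntegrableOn
          (fun x : ℝ × ℝ => p x.1 x.2 / |(-gL * x.1 + x.2 * (VE - x.1))| ^ α)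
          ((Set.Ioo (0:ℝ) VF) ×ˢ (Set.Ioo (0:ℝ) G))) :
    ∀ q : ℝ, 1 ≤ q → q < 8 / 7 →
      MeasureTheory.MemLp (fun x : ℝ × ℝ => p x.1 x.2) (ENNReal.ofReal q)
        (MeasureTheory.volume.restrict ((Set.Ioo (0:ℝ) VF) ×ˢ (Set.Ioo (0:ℝ) G))) :=
  Lq_from_weighted_bounds_general VF VE gL G p hnonneg hJp hsing
end
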